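/- arXiv:2205.08867 — 4 statements merged into one kernel-verified Lean document; each statement's English description precedes it below -/
import Mathlib

section
/- If (f,g) \in \dot H^1(\mathbb{R}^4)\times L^2(\mathbb{R}^4) with \|g\|_{L^2} \le \|Q\|_{\dot H^1}, then \|g\|_{L^2}^2 \le 4\,\mathcal{E}_Z(f,g). -/
/-!
Expanding the energy, `4 E_Z(f,g) - ‖g‖²_{L²} = 2‖f‖²_{Ḣ¹} + 2∫ g|f|²`, so it suffices that
`|∫ g|f|²| ≤ ‖f‖²_{Ḣ¹}`. By Cauchy–Schwarz, `|∫ g|f|²| ≤ ‖g‖_{L²}‖f‖²_{L⁴}`, and the two factors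
are bounded by `‖Q‖_{Ḣ¹}` and, through the sharp Sobolev inequality, by `‖Q‖_{Ḣ¹}⁻¹‖f‖²_{Ḣ¹}`.
-/

open MeasureTheory

noncomputable section

abbrev R4 := EuclideanSpace ℝ (Fin 4)

/-- The homogeneous Sobolev norm `‖f‖_{Ḣ¹} = (∫ |∇f|²)^{1/2}`. -/
def H1norm (f : R4 → ℂ) : ℝ := Real.sqrt (∫ x : R4, ‖fderiv ℝ f x‖ ^ 2)

/-- The `L²` norm of a real-valued function. -/
def L2norm (g : R4 → ℝ) : ℝ := Real.sqrt (∫ x : R4, g x ^ 2)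

/-- The `L⁴` norm `(∫ |f|⁴)^{1/4}`. -/
def L4norm (f : R4 → ℂ) : ℝ := (∫ x : R4, ‖f x‖ ^ 4) ^ ((4 : ℝ)⁻¹)

/-- The Zakharov energy `E_Z(f,g) = ∫ ½|∇f|² + ¼|g|² + ½ Re(g)|f|²` (`g` real-valued). -/
def EZ (f : R4 → ℂ) (g : R4 → ℝ) : ℝ :=
  ∫ x : R4, ((1 / 2) * ‖fderiv ℝ f x‖ ^ 2 + (1 / 4) * g x ^ 2 + (1 / 2) * g x * ‖f x‖ ^ 2)

section CauchySchwarz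

variable {α : Type*} [MeasurableSpace α] {μ : Measure α}

/-- `|u| = √(u²)` is a.e.-strongly measurable even when `u` itself need not be. -/
theorem memLp_two_abs_of_integrable_sq {u : α → ℝ} (hu : Integrable (fun x => u x ^ 2) μ) :
    MemLp (fun x => |u x|) 2 μ := by
  have hmeas : AEStronglyMeasurable (fun x => |u x|) μ := by
    simpa only [Real.sqrt_sq_eq_abs] using
      Real.continuous_sqrt.comp_aestronglyMeasurable hu.aestronglyMeasurable
  exact (memLp_two_iff_integrable_sq hmeas).2 (by simpa only [sq_abs] using hu)

theorem abs_integral_mul_le_sqrt_mul_sqrt {u v : α → ℝ}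
    (hu : Integrable (fun x => u x ^ 2) μ) (hv : Integrable (fun x => v x ^ 2) μ) :
    |∫ x, u x * v x ∂μ| ≤ √(∫ x, u x ^ 2 ∂μ) * √(∫ x, v x ^ 2 ∂μ) := by
  have hLp (w : α → ℝ) (hw : Integrable (fun x => w x ^ 2) μ) :
      MemLp (fun x => |w x|) (ENNReal.ofReal 2) μ := by
    simpa only [ENNReal.ofReal_ofNat] using memLp_two_abs_of_integrable_sq hw
  have hrpow (w : α → ℝ) :
      (∫ x, |w x| ^ (2 : ℝ) ∂μ) ^ (1 / (2 : ℝ)) = √(∫ x, w x ^ 2 ∂μ) := by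
    simp only [Real.rpow_two, sq_abs, Real.sqrt_eq_rpow]
  calc |∫ x, u x * v x ∂μ| ≤ ∫ x, |u x| * |v x| ∂μ := by
        simpa only [abs_mul] using abs_integral_le_integral_abs (f := fun x => u x * v x) (μ := μ)
    _ ≤ (∫ x, |u x| ^ (2 : ℝ) ∂μ) ^ (1 / (2 : ℝ)) * (∫ x, |v x| ^ (2 : ℝ) ∂μ) ^ (1 / (2 : ℝ)) :=
        integral_mul_le_Lp_mul_Lq_of_nonneg Real.HolderConjugate.two_two
          (Filter.Eventually.of_forall fun _ => abs_nonneg _)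
          (Filter.Eventually.of_forall fun _ => abs_nonneg _) (hLp u hu) (hLp v hv)
    _ = √(∫ x, u x ^ 2 ∂μ) * √(∫ x, v x ^ 2 ∂μ) := by rw [hrpow, hrpow]

end CauchySchwarz

theorem H1norm_sq (f : R4 → ℂ) : H1norm f ^ 2 = ∫ x : R4, ‖fderiv ℝ f x‖ ^ 2 :=
  Real.sq_sqrt (integral_nonneg fun _ => by positivity)

theorem L2norm_sq (g : R4 → ℝ) : L2norm g ^ 2 = ∫ x : R4, g x ^ 2 :=
  Real.sq_sqrt (integral_nonneg fun _ => by positivity)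

theorem L4norm_sq (f : R4 → ℂ) : L4norm f ^ 2 = √(∫ x : R4, ‖f x‖ ^ 4) := by
  rw [L4norm, ← Real.rpow_natCast, ← Real.rpow_mul (integral_nonneg fun _ => by positivity),
    Real.sqrt_eq_rpow]
  norm_num

theorem EZ_eq {f : R4 → ℂ} {g : R4 → ℝ}
    (hf1 : Integrable (fun x : R4 => ‖fderiv ℝ f x‖ ^ 2))
    (hg2 : Integrable (fun x : R4 => g x ^ 2))
    (hfg : Integrable (fun x : R4 => g x * ‖f x‖ ^ 2)) :
    EZ f g = (1 / 2) * H1norm f ^ 2 + (1 / 4) * L2norm g ^ 2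
      + (1 / 2) * ∫ x : R4, g x * ‖f x‖ ^ 2 := by
  have h1 : Integrable (fun x : R4 => (1 / 2 : ℝ) * ‖fderiv ℝ f x‖ ^ 2) := hf1.const_mul _
  have h2 : Integrable (fun x : R4 => (1 / 4 : ℝ) * g x ^ 2) := hg2.const_mul _
  have h3 : Integrable (fun x : R4 => (1 / 2 : ℝ) * (g x * ‖f x‖ ^ 2)) := hfg.const_mul _
  have h12 : Integrable (fun x : R4 =>
      (1 / 2 : ℝ) * ‖fderiv ℝ f x‖ ^ 2 + (1 / 4 : ℝ) * g x ^ 2) := h1.add h2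
  simp_rw [EZ, H1norm_sq, L2norm_sq, mul_assoc]
  rw [integral_add h12 h3, integral_add h1 h2,
    integral_const_mul, integral_const_mul, integral_const_mul]

theorem abs_integral_mul_norm_sq_le {f : R4 → ℂ} {g : R4 → ℝ}
    (hf4 : Integrable (fun x : R4 => ‖f x‖ ^ 4))
    (hg2 : Integrable (fun x : R4 => g x ^ 2)) :
    |∫ x : R4, g x * ‖f x‖ ^ 2| ≤ L2norm g * L4norm f ^ 2 := by
  have hf4_sq : Integrable (fun x : R4 => (‖f x‖ ^ 2) ^ 2) := by simpa only [← pow_mul] using hf4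
  simpa only [L4norm_sq, L2norm, ← pow_mul] using abs_integral_mul_le_sqrt_mul_sqrt hg2 hf4_sq

theorem wave_mass_le_energy_general (f : R4 → ℂ) (g : R4 → ℝ) (Qn : ℝ)
    (hf1 : Integrable (fun x : R4 => ‖fderiv ℝ f x‖ ^ 2))
    (hf4 : Integrable (fun x : R4 => ‖f x‖ ^ 4))
    (hg2 : Integrable (fun x : R4 => g x ^ 2))
    (hfg : Integrable (fun x : R4 => g x * ‖f x‖ ^ 2))
    (hSob : L4norm f ^ 2 ≤ Qn⁻¹ * H1norm f ^ 2)
    (hgQ : L2norm g ≤ Qn) :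
    L2norm g ^ 2 ≤ 4 * EZ f g := by
  have hQn_nonneg : 0 ≤ Qn := (Real.sqrt_nonneg _).trans hgQ
  have hcross : |∫ x : R4, g x * ‖f x‖ ^ 2| ≤ H1norm f ^ 2 :=
    calc |∫ x : R4, g x * ‖f x‖ ^ 2| ≤ L2norm g * L4norm f ^ 2 :=
          abs_integral_mul_norm_sq_le hf4 hg2
      _ ≤ Qn * (Qn⁻¹ * H1norm f ^ 2) := mul_le_mul hgQ hSob (sq_nonneg _) hQn_nonneg
      _ = Qn * Qn⁻¹ * H1norm f ^ 2 := (mul_assoc _ _ _).symm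
      _ ≤ H1norm f ^ 2 := mul_le_of_le_one_left (sq_nonneg _) mul_inv_le_one
  rw [EZ_eq hf1 hg2 hfg]
  linarith [neg_abs_le (∫ x : R4, g x * ‖f x‖ ^ 2)]

/-- If ‖g‖_{L²} ≤ ‖Q‖_{Ḣ¹} then ‖g‖_{L²}² ≤ 4 E_Z(f,g).  Here `Qn` denotes ‖Q‖_{Ḣ¹},
and the sharp Sobolev inequality is assumed. -/
theorem wave_mass_le_energy (f : R4 → ℂ) (g : R4 → ℝ) (Qn : ℝ) (hQn : 0 < Qn)
    (hf1 : Integrable (fun x : R4 => ‖fderiv ℝ f x‖ ^ 2))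
    (hf4 : Integrable (fun x : R4 => ‖f x‖ ^ 4))
    (hg2 : Integrable (fun x : R4 => g x ^ 2))
    (hfg : Integrable (fun x : R4 => g x * ‖f x‖ ^ 2))
    (hSob : L4norm f ^ 2 ≤ Qn⁻¹ * H1norm f ^ 2)
    (hgQ : L2norm g ≤ Qn) :
    L2norm g ^ 2 ≤ 4 * EZ f g :=
  wave_mass_le_energy_general f g Qn hf1 hf4 hg2 hfg hSob hgQ
end
end

section
/- Under the hypotheses 4\mathcal{E}_Z(f,g) \le \|Q\|_{\dot H^1}^2, \|f\|_{\dot H^1} \le \|Q\|_{\dot H^1}, and the sharp Sobolev inequality, one has the refined bound \|f\|_{\dot H^1}^2 \le \frac{\|Q\|_{\dot H^1}^2}{2\|Q\|_{\dot H^1}^2 - 4\mathcal{E}_Z(f,g)}\, 4\mathcal{E}_Z(f,g). -/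
open MeasureTheory

noncomputable section

/-!
Completing the square, `4 E_Z(f,g) = 2‖f‖²_{Ḣ¹} + ‖g + |f|²‖²_{L²} - ‖f‖⁴_{L⁴}`, so sharp Sobolev
gives `4 E_Z ≥ 2A - A²/‖Q‖²` with `A = ‖f‖²_{Ḣ¹}`. Below the ground state (`A ≤ ‖Q‖²`) this
forces `A ≤ 4 E_Z`, and the refined bound is this quadratic inequality solved for `A`.
-/

theorem le_div_mul_of_two_mul_sub_sq_div_le {A e q : ℝ} (hq : 0 < q) (hA : 0 ≤ A)
    (hAq : A ≤ q) (heq : e ≤ q) (h : 2 * A - A ^ 2 / q ≤ e) :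
    A ≤ q / (2 * q - e) * e := by
  have hqe : q * (2 * A) - A ^ 2 ≤ q * e := by
    rw [sub_le_comm, le_div_iff₀ hq] at h
    linarith
  have hAe : A ≤ e := by nlinarith
  rw [div_mul_eq_mul_div, le_div_iff₀ (by linarith)]
  nlinarith

theorem two_mul_integral_sub_integral_pow_four_le {α : Type*} [MeasurableSpace α]
    {μ : Measure α} {a g u : α → ℝ} (ha : Integrable a μ)
    (hg : Integrable (fun x => g x ^ 2) μ) (hu : Integrable (fun x => u x ^ 4) μ)
    (hgu : Integrable (fun x => g x * u x ^ 2) μ) :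
    2 * ∫ x, a x ∂μ - ∫ x, u x ^ 4 ∂μ ≤
      4 * ∫ x, ((1 / 2) * a x + (1 / 4) * g x ^ 2 + (1 / 2) * g x * u x ^ 2) ∂μ := by
  have hE : Integrable (fun x => (1 / 2) * a x + (1 / 4) * g x ^ 2 + (1 / 2) * g x * u x ^ 2) μ := by
    refine ((ha.const_mul _).add (hg.const_mul _)).add ?_
    simpa only [mul_assoc] using hgu.const_mul (1 / 2)
  calc 2 * ∫ x, a x ∂μ - ∫ x, u x ^ 4 ∂μ = ∫ x, (2 * a x - u x ^ 4) ∂μ := by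
        rw [integral_sub (ha.const_mul 2) hu, integral_const_mul]
    _ ≤ ∫ x, 4 * ((1 / 2) * a x + (1 / 4) * g x ^ 2 + (1 / 2) * g x * u x ^ 2) ∂μ :=
        integral_mono ((ha.const_mul 2).sub hu) (hE.const_mul 4)
          fun x => by nlinarith [sq_nonneg (g x + u x ^ 2)]
    _ = _ := integral_const_mul _ _

theorem L4norm_pow_four (f : R4 → ℂ) : L4norm f ^ 4 = ∫ x : R4, ‖f x‖ ^ 4 := by
  rw [L4norm, ← Real.rpow_natCast, ← Real.rpow_mul (integral_nonneg fun _ => by positivity)]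
  norm_num

/-- The refined bound  below the
ground state. -/
theorem refined_H1_bound (f : R4 → ℂ) (g : R4 → ℝ) (Qn : ℝ) (hQn : 0 < Qn)
    (hf1 : Integrable (fun x : R4 => ‖fderiv ℝ f x‖ ^ 2))
    (hf4 : Integrable (fun x : R4 => ‖f x‖ ^ 4))
    (hg2 : Integrable (fun x : R4 => g x ^ 2))
    (hfg : Integrable (fun x : R4 => g x * ‖f x‖ ^ 2))
    (hSob : L4norm f ^ 2 ≤ Qn⁻¹ * H1norm f ^ 2)
    (hE : 4 * EZ f g ≤ Qn ^ 2)
    (hfQ : H1norm f ≤ Qn) :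
    H1norm f ^ 2 ≤ Qn ^ 2 / (2 * Qn ^ 2 - 4 * EZ f g) * (4 * EZ f g) := by
  have hSob4 : ∫ x : R4, ‖f x‖ ^ 4 ≤ (H1norm f ^ 2) ^ 2 / Qn ^ 2 := by
    rw [← L4norm_pow_four, div_eq_inv_mul, ← inv_pow, ← mul_pow]
    calc L4norm f ^ 4 = (L4norm f ^ 2) ^ 2 := by ring
      _ ≤ (Qn⁻¹ * H1norm f ^ 2) ^ 2 := pow_le_pow_left₀ (by positivity) hSob 2
  have hEnergy := two_mul_integral_sub_integral_pow_four_le hf1 hg2 hf4 hfg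
  rw [← H1norm_sq] at hEnergy
  refine le_div_mul_of_two_mul_sub_sq_div_le (by positivity) (by positivity)
    (pow_le_pow_left₀ (Real.sqrt_nonneg _) hfQ 2) hE ?_
  rw [EZ]
  linarith
end
end

section
/- For f \in \dot H^1(\mathbb{R}^4) with 4\mathcal{E}_{NLS}(f) < \|Q\|_{\dot H^1}^2, the following are equivalent: (a) \mathcal{K}(f) > 0, (b) 0 < \|f\|_{L^4} < \|Q\|_{L^4}, (c) 0 < \|f\|_{\dot H^1} < \|Q\|_{\dot H^1}, (d) \|f\|_{\dot H^1}^2 < 4\mathcal{E}_{NLS}(f). -/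
open MeasureTheory

noncomputable section

/-- The NLS energy. -/
def ENLS (f : R4 → ℂ) : ℝ :=
  ∫ x : R4, ((1 / 2) * ‖fderiv ℝ f x‖ ^ 2 - (1 / 4) * ‖f x‖ ^ 4)

/-- The functional K(f) = ‖f‖_{Ḣ¹}² - ‖f‖_{L⁴}⁴. -/
def Kfun (f : R4 → ℂ) : ℝ := H1norm f ^ 2 - L4norm f ^ 4
/-!
Write `h = ‖f‖_{Ḣ¹}`, `ℓ = ‖f‖_{L⁴}`, `q = ‖Q‖_{Ḣ¹} = ‖Q‖_{L⁴}²`.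
Since `4 E_NLS(f) = h² + K(f)`, (a) and (d) agree, and `K(f) > 0` together with
`4 E_NLS(f) < q²` gives `h < q`. Conversely the Sobolev bound `ℓ² ≤ h² / q` yields
`ℓ⁴ ≤ (h / q)² h² < h²` when `0 < h < q`, and `K(f) ≥ ℓ² (q - ℓ²) > 0` when `0 < ℓ² < q`.
The one analytic input is that `ℓ = 0` forces `h = 0`: then `f` vanishes on a dense set, so its
derivative vanishes wherever it exists, and `fderiv` is `0` everywhere else by convention.
-/

theorem fderiv_eq_zero_of_dense_zero {𝕜 E F : Type*} [NontriviallyNormedField 𝕜]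
    [NormedAddCommGroup E] [NormedSpace 𝕜 E] [NormedAddCommGroup F] [NormedSpace 𝕜 F]
    {f : E → F} (hf : Dense {x | f x = 0}) (x : E) : fderiv 𝕜 f x = 0 := by
  by_cases hd : DifferentiableAt 𝕜 f x
  · have hfx : f x = 0 := by
      simpa using hd.continuousAt.continuousWithinAt.mem_closure (t := {0}) (hf x)
        fun _ hy => hy
    have hzero : HasFDerivWithinAt f (0 : E →L[𝕜] F) {x | f x = 0} x :=
      (hasFDerivWithinAt_const (0 : F) x _).congr (fun y hy => hy) hfx
    exact (uniqueDiffWithinAt_univ.mono_closure (by simp [hf.closure_eq])).eq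
      hd.hasFDerivAt.hasFDerivWithinAt hzero
  · exact fderiv_zero_of_not_differentiableAt hd

theorem fderiv_eq_zero_of_ae_eq_zero {𝕜 E F : Type*} [NontriviallyNormedField 𝕜]
    [NormedAddCommGroup E] [NormedSpace 𝕜 E] [NormedAddCommGroup F] [NormedSpace 𝕜 F]
    [MeasurableSpace E] {μ : Measure E} [μ.IsOpenPosMeasure] {f : E → F} (hf : f =ᵐ[μ] 0)
    (x : E) : fderiv 𝕜 f x = 0 :=
  fderiv_eq_zero_of_dense_zero (μ.dense_of_ae hf) x

theorem H1norm_nonneg (f : R4 → ℂ) : 0 ≤ H1norm f :=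
  Real.sqrt_nonneg _

theorem L4norm_nonneg (f : R4 → ℂ) : 0 ≤ L4norm f :=
  Real.rpow_nonneg (integral_nonneg fun _ => by positivity) _

theorem four_mul_ENLS {f : R4 → ℂ} (hf1 : Integrable (fun x : R4 => ‖fderiv ℝ f x‖ ^ 2))
    (hf4 : Integrable (fun x : R4 => ‖f x‖ ^ 4)) : 4 * ENLS f = H1norm f ^ 2 + Kfun f := by
  rw [Kfun, ENLS, integral_sub (hf1.const_mul _) (hf4.const_mul _), integral_const_mul,
    integral_const_mul, H1norm_sq, L4norm_pow_four]
  ring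

theorem H1norm_eq_zero_of_L4norm_eq_zero {f : R4 → ℂ}
    (hf4 : Integrable (fun x : R4 => ‖f x‖ ^ 4)) (h : L4norm f = 0) : H1norm f = 0 := by
  have hf : f =ᵐ[volume] 0 := by
    have h4 : (fun x : R4 => ‖f x‖ ^ 4) =ᵐ[volume] 0 := by
      rw [← integral_eq_zero_iff_of_nonneg (fun _ => by positivity) hf4, ← L4norm_pow_four, h]
      norm_num
    filter_upwards [h4] with x hx
    simpa using hx
  simp [H1norm, fderiv_eq_zero_of_ae_eq_zero hf]

theorem L4norm_pos_of_Kfun_pos {f : R4 → ℂ} (hf4 : Integrable (fun x : R4 => ‖f x‖ ^ 4))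
    (hK : 0 < Kfun f) : 0 < L4norm f := by
  refine (L4norm_nonneg f).lt_of_ne fun h => ?_
  rw [Kfun, H1norm_eq_zero_of_L4norm_eq_zero hf4 h.symm, ← h] at hK
  norm_num at hK

theorem H1norm_pos_of_Kfun_pos {f : R4 → ℂ} (hK : 0 < Kfun f) : 0 < H1norm f := by
  have : 0 < H1norm f ^ 2 := by
    rw [Kfun] at hK
    nlinarith [pow_nonneg (L4norm_nonneg f) 4]
  exact lt_of_pow_lt_pow_left₀ 2 (H1norm_nonneg f) (by rwa [zero_pow two_ne_zero])

theorem H1norm_lt_of_Kfun_pos {f : R4 → ℂ} {q : ℝ} (hq : 0 ≤ q)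
    (hf1 : Integrable (fun x : R4 => ‖fderiv ℝ f x‖ ^ 2))
    (hf4 : Integrable (fun x : R4 => ‖f x‖ ^ 4)) (hE : 4 * ENLS f < q ^ 2) (hK : 0 < Kfun f) :
    H1norm f < q := by
  rw [four_mul_ENLS hf1 hf4] at hE
  exact lt_of_pow_lt_pow_left₀ 2 hq (by linarith)

section Sobolev

variable {f : R4 → ℂ} {q : ℝ}

theorem Kfun_pos_of_H1norm_lt (hq : 0 < q) (hSob : L4norm f ^ 2 ≤ q⁻¹ * H1norm f ^ 2)
    (h0 : 0 < H1norm f) (h : H1norm f < q) : 0 < Kfun f := by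
  have hratio : (H1norm f / q) ^ 2 < 1 :=
    pow_lt_one₀ (by positivity) ((div_lt_one hq).2 h) two_ne_zero
  have : L4norm f ^ 4 < H1norm f ^ 2 :=
    calc L4norm f ^ 4 = (L4norm f ^ 2) ^ 2 := by ring
      _ ≤ (q⁻¹ * H1norm f ^ 2) ^ 2 := pow_le_pow_left₀ (sq_nonneg _) hSob 2
      _ = (H1norm f / q) ^ 2 * H1norm f ^ 2 := by ring
      _ < 1 * H1norm f ^ 2 := mul_lt_mul_of_pos_right hratio (pow_pos h0 2)
      _ = H1norm f ^ 2 := one_mul _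
  rw [Kfun]
  linarith

theorem Kfun_pos_of_L4norm_sq_lt (hq : 0 < q) (hSob : L4norm f ^ 2 ≤ q⁻¹ * H1norm f ^ 2)
    (h0 : 0 < L4norm f) (h : L4norm f ^ 2 < q) : 0 < Kfun f := by
  have hH : q * L4norm f ^ 2 ≤ H1norm f ^ 2 := by
    rwa [le_inv_mul_iff₀ hq] at hSob
  rw [Kfun]
  nlinarith [mul_pos (pow_pos h0 2) (sub_pos.2 h)]

theorem L4norm_sq_lt_of_H1norm_lt (hq : 0 < q) (hSob : L4norm f ^ 2 ≤ q⁻¹ * H1norm f ^ 2)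
    (h : H1norm f < q) : L4norm f ^ 2 < q :=
  calc L4norm f ^ 2 ≤ q⁻¹ * H1norm f ^ 2 := hSob
    _ < q⁻¹ * q ^ 2 := by gcongr; exact H1norm_nonneg f
    _ = q := by field_simp

end Sobolev

/-- Characterisation of the ground state condition for the NLS energy: below the ground
state energy the conditions (a) K(f) > 0, (b) 0 < ‖f‖_{L⁴} < ‖Q‖_{L⁴},
(c) 0 < ‖f‖_{Ḣ¹} < ‖Q‖_{Ḣ¹}, (d) ‖f‖_{Ḣ¹}² < 4 E_NLS(f) are equivalent.
Here Qn = ‖Q‖_{Ḣ¹} and QL4 = ‖Q‖_{L⁴}, related by ‖Q‖_{L⁴}² = ‖Q‖_{Ḣ¹}. -/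
theorem ground_state_characterisation (f : R4 → ℂ) (Qn QL4 : ℝ)
    (hQn : 0 < Qn) (hQL4 : 0 < QL4) (hQ : QL4 ^ 2 = Qn)
    (hf1 : Integrable (fun x : R4 => ‖fderiv ℝ f x‖ ^ 2))
    (hf4 : Integrable (fun x : R4 => ‖f x‖ ^ 4))
    (hSob : L4norm f ^ 2 ≤ Qn⁻¹ * H1norm f ^ 2)
    (hE : 4 * ENLS f < Qn ^ 2) :
    (0 < Kfun f ↔ (0 < L4norm f ∧ L4norm f < QL4)) ∧
      (0 < Kfun f ↔ (0 < H1norm f ∧ H1norm f < Qn)) ∧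
      (0 < Kfun f ↔ H1norm f ^ 2 < 4 * ENLS f) := by
  have hH1 : 0 < Kfun f ↔ 0 < H1norm f ∧ H1norm f < Qn :=
    ⟨fun hK => ⟨H1norm_pos_of_Kfun_pos hK, H1norm_lt_of_Kfun_pos hQn.le hf1 hf4 hE hK⟩,
      fun ⟨h0, h⟩ => Kfun_pos_of_H1norm_lt hQn hSob h0 h⟩
  have hL4 : L4norm f < QL4 ↔ L4norm f ^ 2 < Qn := by
    rw [← hQ, pow_lt_pow_iff_left₀ (L4norm_nonneg f) hQL4.le two_ne_zero]
  refine ⟨⟨fun hK => ⟨L4norm_pos_of_Kfun_pos hf4 hK, ?_⟩, fun ⟨h0, h⟩ => ?_⟩, hH1, ?_⟩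
  · exact hL4.2 (L4norm_sq_lt_of_H1norm_lt hQn hSob (hH1.1 hK).2)
  · exact Kfun_pos_of_L4norm_sq_lt hQn hSob h0 (hL4.1 h)
  · rw [four_mul_ENLS hf1 hf4, lt_add_iff_pos_right]
end
end

section
/- Let X be a Banach space, u_0 \in X, and \mathcal{I}: X^3 \to X a symmetric trilinear map satisfying \|\mathcal{I}[u,v,w]\|_X \le C_0\|u\|_X\|v\|_X\|w\|_X. Define \rho(v) = \sup_{\|\phi\|_X \le 1} \|\mathcal{I}[\phi,\phi,v]\|_X restricted to diagonal arguments as needed. For every A > 0 there exists \epsilon > 0 (depending only on A and C_0) such that if \|u_0\|_X \le A and \rho(u_0)^{1/2}\cdot\|u_0\|_X^{1/2} \le \epsilon (in particular if \rho(u_0) \le \epsilon^2/A), then the equation u = u_0 + \mathcal{I}[u,u,u] has a solution u \in X with \|u - u_0\|_X \le C(A)\,\rho(u_0). -/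
/-!
The map `u ↦ u₀ + I[u,u,u]` contracts the ball of radius `R = 2A²ρ(u₀)` around `u₀`.
Polarization gives `‖I[φ,ψ,u₀]‖ ≤ 2ρ(u₀)‖φ‖‖ψ‖`, so on that ball the Lipschitz constant is at most
`3(2ρ(u₀)A + 3C₀AR)`, small once `ρ(u₀)` is; and since `ρ(u₀) ≤ C₀‖u₀‖`, the hypothesis
`ρ(u₀)‖u₀‖ ≤ ε²` gives `ρ(u₀)² ≤ C₀ε²`. The centre moves by `‖I[u₀,u₀,u₀]‖ ≤ ρ(u₀)A² = R/2`,
so the ball is mapped into itself.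
-/

noncomputable section

/-- The controlling quantity `ρ(v) = sup_{‖φ‖ ≤ 1} ‖I[φ, φ, v]‖`. -/
def rho {X : Type*} [NormedAddCommGroup X] [NormedSpace ℝ X]
    (T : X →L[ℝ] X →L[ℝ] X →L[ℝ] X) (v : X) : ℝ :=
  sSup {r : ℝ | ∃ φ : X, ‖φ‖ ≤ 1 ∧ r = ‖T φ φ v‖}

open Metric Set NNReal

theorem exists_fixedPoint_mem_closedBall {α : Type*} [MetricSpace α] [CompleteSpace α]
    {f : α → α} {x₀ : α} {R : ℝ} {K : ℝ≥0} (hK : K < 1)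
    (hf : LipschitzOnWith K f (closedBall x₀ R)) (hx₀ : dist (f x₀) x₀ ≤ (1 - K) * R) :
    ∃ x ∈ closedBall x₀ R, f x = x := by
  have hR : 0 ≤ R :=
    nonneg_of_mul_nonneg_right (dist_nonneg.trans hx₀) (sub_pos.2 (by exact_mod_cast hK))
  have hmaps : MapsTo f (closedBall x₀ R) (closedBall x₀ R) := fun x hx => by
    rw [mem_closedBall] at hx ⊢
    calc dist (f x) x₀ ≤ dist (f x) (f x₀) + dist (f x₀) x₀ := dist_triangle _ _ _
      _ ≤ K * dist x x₀ + (1 - K) * R :=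
        add_le_add (hf.dist_le_mul x hx x₀ (mem_closedBall_self hR)) hx₀
      _ ≤ K * R + (1 - K) * R := by gcongr
      _ = R := by ring
  obtain ⟨x, hx, hfix, -⟩ := ContractingWith.exists_fixedPoint' isClosed_closedBall.isComplete
    hmaps ⟨hK, hf.mapsToRestrict hmaps⟩ (mem_closedBall_self hR) (edist_ne_top _ _)
  exact ⟨x, hx, hfix⟩

section Trilinear

variable {X : Type*} [NormedAddCommGroup X] [NormedSpace ℝ X]
  {T : X →L[ℝ] X →L[ℝ] X →L[ℝ] X} {C : ℝ}

lemma norm_apply_self_le_mul_norm (hC : 0 ≤ C) (hT : ∀ u v w : X, ‖T u v w‖ ≤ C * ‖u‖ * ‖v‖ * ‖w‖)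
    {φ : X} (hφ : ‖φ‖ ≤ 1) (v : X) : ‖T φ φ v‖ ≤ C * ‖v‖ :=
  calc ‖T φ φ v‖ ≤ C * ‖φ‖ * ‖φ‖ * ‖v‖ := hT φ φ v
    _ ≤ C * 1 * 1 * ‖v‖ := by gcongr
    _ = C * ‖v‖ := by ring

lemma norm_apply_self_le_rho (hC : 0 ≤ C) (hT : ∀ u v w : X, ‖T u v w‖ ≤ C * ‖u‖ * ‖v‖ * ‖w‖)
    {φ : X} (hφ : ‖φ‖ ≤ 1) (v : X) : ‖T φ φ v‖ ≤ rho T v := by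
  refine le_csSup ⟨C * ‖v‖, ?_⟩ ⟨φ, hφ, rfl⟩
  rintro _ ⟨ψ, hψ, rfl⟩
  exact norm_apply_self_le_mul_norm hC hT hψ v

lemma rho_nonneg (hC : 0 ≤ C) (hT : ∀ u v w : X, ‖T u v w‖ ≤ C * ‖u‖ * ‖v‖ * ‖w‖) (v : X) :
    0 ≤ rho T v := by
  simpa using norm_apply_self_le_rho hC hT (φ := 0) (by simp) v

lemma rho_le_mul_norm (hC : 0 ≤ C) (hT : ∀ u v w : X, ‖T u v w‖ ≤ C * ‖u‖ * ‖v‖ * ‖w‖) (v : X) :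
    rho T v ≤ C * ‖v‖ := by
  refine csSup_le ⟨_, 0, by simp, rfl⟩ ?_
  rintro _ ⟨φ, hφ, rfl⟩
  exact norm_apply_self_le_mul_norm hC hT hφ v

lemma norm_apply_self_le_rho_mul_sq (hC : 0 ≤ C)
    (hT : ∀ u v w : X, ‖T u v w‖ ≤ C * ‖u‖ * ‖v‖ * ‖w‖) (φ v : X) :
    ‖T φ φ v‖ ≤ rho T v * ‖φ‖ ^ 2 := by
  rcases eq_or_ne φ 0 with rfl | hφ
  · simp
  have hφ' : 0 < ‖φ‖ := norm_pos_iff.2 hφ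
  have hunit := norm_apply_self_le_rho hC hT (norm_smul_inv_norm (𝕜 := ℝ) hφ).le v
  simp only [RCLike.ofReal_real_eq_id, id_eq, map_smul, smul_apply, norm_smul, norm_inv,
    norm_norm] at hunit
  calc ‖T φ φ v‖ = ‖φ‖ ^ 2 * (‖φ‖⁻¹ * (‖φ‖⁻¹ * ‖T φ φ v‖)) := by field_simp
    _ ≤ ‖φ‖ ^ 2 * rho T v := by gcongr
    _ = rho T v * ‖φ‖ ^ 2 := mul_comm _ _

variable {v : X}

lemma four_smul_apply_eq_sub (hsymm : ∀ φ ψ : X, T φ ψ v = T ψ φ v) (φ ψ : X) :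
    (4 : ℝ) • T φ ψ v = T (φ + ψ) (φ + ψ) v - T (φ - ψ) (φ - ψ) v := by
  simp only [map_add, map_sub, add_apply, sub_apply, hsymm ψ φ]
  module

lemma norm_apply_le_two_mul_rho_of_norm_le_one (hC : 0 ≤ C)
    (hT : ∀ u v w : X, ‖T u v w‖ ≤ C * ‖u‖ * ‖v‖ * ‖w‖) (hsymm : ∀ φ ψ : X, T φ ψ v = T ψ φ v)
    {φ ψ : X} (hφ : ‖φ‖ ≤ 1) (hψ : ‖ψ‖ ≤ 1) : ‖T φ ψ v‖ ≤ 2 * rho T v := by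
  have hρ := rho_nonneg hC hT v
  have hsum : ‖φ + ψ‖ ≤ 2 := (norm_add_le _ _).trans (by linarith)
  have hdiff : ‖φ - ψ‖ ≤ 2 := (norm_sub_le _ _).trans (by linarith)
  have h4 : 4 * ‖T φ ψ v‖ ≤ 8 * rho T v :=
    calc 4 * ‖T φ ψ v‖ = ‖(4 : ℝ) • T φ ψ v‖ := by rw [norm_smul]; norm_num
      _ ≤ ‖T (φ + ψ) (φ + ψ) v‖ + ‖T (φ - ψ) (φ - ψ) v‖ := by
        rw [four_smul_apply_eq_sub hsymm]; exact norm_sub_le _ _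
      _ ≤ rho T v * ‖φ + ψ‖ ^ 2 + rho T v * ‖φ - ψ‖ ^ 2 :=
        add_le_add (norm_apply_self_le_rho_mul_sq hC hT _ _)
          (norm_apply_self_le_rho_mul_sq hC hT _ _)
      _ ≤ rho T v * 2 ^ 2 + rho T v * 2 ^ 2 := by gcongr
      _ = 8 * rho T v := by ring
  linarith

lemma norm_apply_le_two_mul_rho_mul (hC : 0 ≤ C)
    (hT : ∀ u v w : X, ‖T u v w‖ ≤ C * ‖u‖ * ‖v‖ * ‖w‖) (hsymm : ∀ φ ψ : X, T φ ψ v = T ψ φ v)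
    (φ ψ : X) : ‖T φ ψ v‖ ≤ 2 * rho T v * ‖φ‖ * ‖ψ‖ := by
  rcases eq_or_ne φ 0 with rfl | hφ
  · simp
  rcases eq_or_ne ψ 0 with rfl | hψ
  · simp
  have hunit := norm_apply_le_two_mul_rho_of_norm_le_one hC hT hsymm
    (norm_smul_inv_norm (𝕜 := ℝ) hφ).le (norm_smul_inv_norm (𝕜 := ℝ) hψ).le
  simp only [RCLike.ofReal_real_eq_id, id_eq, map_smul, smul_apply, norm_smul, norm_inv,
    norm_norm] at hunit
  have hφ' : 0 < ‖φ‖ := norm_pos_iff.2 hφ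
  have hψ' : 0 < ‖ψ‖ := norm_pos_iff.2 hψ
  calc ‖T φ ψ v‖ = ‖φ‖ * ‖ψ‖ * (‖ψ‖⁻¹ * (‖φ‖⁻¹ * ‖T φ ψ v‖)) := by field_simp
    _ ≤ ‖φ‖ * ‖ψ‖ * (2 * rho T v) := by gcongr
    _ = 2 * rho T v * ‖φ‖ * ‖ψ‖ := by ring

lemma apply_self_sub_apply_self (hsymm : ∀ u v w : X, T u v w = T v u w ∧ T u v w = T u w v)
    (u w : X) : T u u u - T w w w = T u u (u - w) + T u w (u - w) + T w w (u - w) := by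
  simp only [map_sub]
  rw [(hsymm u w u).2, (hsymm w w u).2, (hsymm w u w).1]
  abel

lemma norm_apply_sub_apply_le (hT : ∀ u v w : X, ‖T u v w‖ ≤ C * ‖u‖ * ‖v‖ * ‖w‖)
    (u₀ u w d : X) :
    ‖T u w d - T u₀ u₀ d‖ ≤ C * (‖u - u₀‖ * ‖w‖ + ‖u₀‖ * ‖w - u₀‖) * ‖d‖ := by
  have hsplit : T u w d - T u₀ u₀ d = T (u - u₀) w d + T u₀ (w - u₀) d := by
    simp only [map_sub, sub_apply]
    abel
  calc ‖T u w d - T u₀ u₀ d‖ ≤ ‖T (u - u₀) w d‖ + ‖T u₀ (w - u₀) d‖ :=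
        hsplit ▸ norm_add_le _ _
    _ ≤ C * ‖u - u₀‖ * ‖w‖ * ‖d‖ + C * ‖u₀‖ * ‖w - u₀‖ * ‖d‖ := add_le_add (hT _ _ _) (hT _ _ _)
    _ = C * (‖u - u₀‖ * ‖w‖ + ‖u₀‖ * ‖w - u₀‖) * ‖d‖ := by ring

lemma norm_apply_le_of_mem_closedBall (hC : 0 ≤ C)
    (hT : ∀ u v w : X, ‖T u v w‖ ≤ C * ‖u‖ * ‖v‖ * ‖w‖)
    (hsymm : ∀ u v w : X, T u v w = T v u w ∧ T u v w = T u w v)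
    {u₀ u w : X} {A R : ℝ} (hu₀ : ‖u₀‖ ≤ A) (hRA : R ≤ A)
    (hu : u ∈ closedBall u₀ R) (hw : w ∈ closedBall u₀ R) (d : X) :
    ‖T u w d‖ ≤ (2 * rho T u₀ * A + 3 * C * A * R) * ‖d‖ := by
  rw [mem_closedBall_iff_norm] at hu hw
  have hR : 0 ≤ R := (norm_nonneg _).trans hu
  have hA : 0 ≤ A := hR.trans hRA
  have hw' : ‖w‖ ≤ 2 * A :=
    calc ‖w‖ = ‖u₀ + (w - u₀)‖ := by rw [add_sub_cancel]
      _ ≤ 2 * A := (norm_add_le _ _).trans (by linarith)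
  have hcenter : ‖T u₀ u₀ d‖ ≤ 2 * rho T u₀ * A * ‖d‖ := by
    rw [(hsymm u₀ u₀ d).2]
    refine (norm_apply_le_two_mul_rho_mul hC hT (fun φ ψ => (hsymm φ ψ u₀).1) u₀ d).trans ?_
    have := rho_nonneg hC hT u₀
    gcongr
  calc ‖T u w d‖ ≤ ‖T u₀ u₀ d‖ + ‖T u w d - T u₀ u₀ d‖ := norm_le_insert' _ _
    _ ≤ 2 * rho T u₀ * A * ‖d‖ + C * (R * (2 * A) + A * R) * ‖d‖ := by
      gcongr
      exact (norm_apply_sub_apply_le hT u₀ u w d).trans (by gcongr)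
    _ = (2 * rho T u₀ * A + 3 * C * A * R) * ‖d‖ := by ring

lemma lipschitzOnWith_add_apply_self (hC : 0 ≤ C)
    (hT : ∀ u v w : X, ‖T u v w‖ ≤ C * ‖u‖ * ‖v‖ * ‖w‖)
    (hsymm : ∀ u v w : X, T u v w = T v u w ∧ T u v w = T u w v)
    {u₀ : X} {A R : ℝ} (hu₀ : ‖u₀‖ ≤ A) (hRA : R ≤ A) {K : ℝ≥0}
    (hK : 3 * (2 * rho T u₀ * A + 3 * C * A * R) ≤ K) :
    LipschitzOnWith K (fun u => u₀ + T u u u) (closedBall u₀ R) := by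
  refine LipschitzOnWith.of_dist_le_mul fun u hu w hw => ?_
  set L := 2 * rho T u₀ * A + 3 * C * A * R
  have hL : ∀ a ∈ closedBall u₀ R, ∀ b ∈ closedBall u₀ R, ‖T a b (u - w)‖ ≤ L * ‖u - w‖ :=
    fun a ha b hb => norm_apply_le_of_mem_closedBall hC hT hsymm hu₀ hRA ha hb _
  rw [dist_eq_norm, dist_eq_norm, add_sub_add_left_eq_sub, apply_self_sub_apply_self hsymm]
  calc _ ≤ ‖T u u (u - w)‖ + ‖T u w (u - w)‖ + ‖T w w (u - w)‖ := norm_add₃_le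
    _ ≤ L * ‖u - w‖ + L * ‖u - w‖ + L * ‖u - w‖ :=
      add_le_add (add_le_add (hL u hu u hu) (hL u hu w hw)) (hL w hw w hw)
    _ = 3 * L * ‖u - w‖ := by ring
    _ ≤ K * ‖u - w‖ := by gcongr

end Trilinear

lemma le_of_sqrt_mul_sqrt_le_div {ρ n M δ : ℝ} (hρ : 0 ≤ ρ) (hn : 0 ≤ n) (hM : 0 ≤ M)
    (hδ : 0 ≤ δ) (hρn : ρ ≤ M * n) (h : √ρ * √n ≤ δ / (M + 1)) : ρ ≤ δ := by
  rw [← Real.sqrt_mul hρ, Real.sqrt_le_left (by positivity), div_pow,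
    le_div_iff₀ (by positivity)] at h
  have hM' : M ≤ (M + 1) ^ 2 := by nlinarith
  refine le_of_sq_le_sq ?_ hδ
  nlinarith [mul_le_mul_of_nonneg_left hρn hρ, mul_le_mul_of_nonneg_right hM' (mul_nonneg hρ hn)]

/-- Controlling-quantity fixed point theorem: if `I` is a symmetric bounded trilinear
map on a Banach space `X` with `‖I[u,v,w]‖ ≤ C₀‖u‖‖v‖‖w‖`, then for every `A > 0`
there are `ε > 0` and `C > 0` (depending only on `A` and `C₀`) such that whenever
`‖u₀‖ ≤ A` and `ρ(u₀)^{1/2}‖u₀‖^{1/2} ≤ ε`, the equation `u = u₀ + I[u,u,u]` has a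
solution `u ∈ X` with `‖u - u₀‖ ≤ C ρ(u₀)`. -/
theorem controlling_quantity_fixed_point
    {X : Type*} [NormedAddCommGroup X] [NormedSpace ℝ X] [CompleteSpace X]
    (T : X →L[ℝ] X →L[ℝ] X →L[ℝ] X) (C0 : ℝ) (hC0 : 0 ≤ C0)
    (hbound : ∀ u v w : X, ‖T u v w‖ ≤ C0 * ‖u‖ * ‖v‖ * ‖w‖)
    (hsymm : ∀ u v w : X, T u v w = T v u w ∧ T u v w = T u w v) :
    ∀ A : ℝ, 0 < A → ∃ ε C : ℝ, 0 < ε ∧ 0 < C ∧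
      ∀ u0 : X, ‖u0‖ ≤ A → Real.sqrt (rho T u0) * Real.sqrt ‖u0‖ ≤ ε →
        ∃ u : X, u = u0 + T u u u ∧ ‖u - u0‖ ≤ C * rho T u0 := by
  intro A hA
  -- `ρ(u₀) ≤ D⁻¹` makes the Lipschitz constant on the ball of radius `2A²ρ(u₀)` at most `1/2`.
  set D := 12 * A * (1 + 3 * C0 * A ^ 2)
  have hD : 0 < D := by positivity
  refine ⟨D⁻¹ / (C0 + 1), 2 * A ^ 2, by positivity, by positivity, fun u0 hu0 hsmall => ?_⟩
  set ρ := rho T u0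
  have hρ : 0 ≤ ρ := rho_nonneg hC0 hbound u0
  have hρD : ρ * D ≤ 1 := by
    have hρ_le : ρ ≤ D⁻¹ := le_of_sqrt_mul_sqrt_le_div hρ (norm_nonneg u0) hC0 (by positivity)
      (rho_le_mul_norm hC0 hbound u0) hsmall
    calc ρ * D ≤ D⁻¹ * D := by gcongr
      _ = 1 := inv_mul_cancel₀ hD.ne'
  have hRA : 2 * A ^ 2 * ρ ≤ A := by nlinarith [mul_nonneg (mul_nonneg hρ hC0) (pow_pos hA 3).le]
  have hlip : LipschitzOnWith (1 / 2) (fun u => u0 + T u u u) (closedBall u0 (2 * A ^ 2 * ρ)) :=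
    lipschitzOnWith_add_apply_self hC0 hbound hsymm hu0 hRA (by norm_num; linarith)
  have hcenter : dist (u0 + T u0 u0 u0) u0 ≤ (1 - (1 / 2 : ℝ≥0)) * (2 * A ^ 2 * ρ) := by
    rw [dist_eq_norm, add_sub_cancel_left]
    calc ‖T u0 u0 u0‖ ≤ ρ * ‖u0‖ ^ 2 := norm_apply_self_le_rho_mul_sq hC0 hbound u0 u0
      _ ≤ ρ * A ^ 2 := by gcongr
      _ = (1 - (1 / 2 : ℝ≥0)) * (2 * A ^ 2 * ρ) := by norm_num; ring
  obtain ⟨u, hu, hfix⟩ := exists_fixedPoint_mem_closedBall (by norm_num) hlip hcenter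
  exact ⟨u, hfix.symm, by rwa [mem_closedBall_iff_norm] at hu⟩
end
end
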